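/- Let A ∈ ℝ^{m×n}, let S ⊆ {1,…,m} and i ∈ {1,…,m} \ S. Let b_i be the i-th row of B = A − π_S(A), and let C = A − π_{S∪{i}}(A). Then for every integer r ≥ 0, ∑_{T ⊆ {1,…,m}\(S∪{i}), |T|=r} det(A_{S∪{i}∪T} A_{S∪{i}∪T}^T) = ‖b_i‖² · det(A_S A_S^T) · ∑_{T ⊆ {1,…,m}, |T|=r} det(C_T C_T^T). -/

import Mathlib

open Matrix BigOperators

noncomputable def projSpan {m n : ℕ} (A : Matrix (Fin m) (Fin n) ℝ) (S : Finset (Fin m)) :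
    Matrix (Fin m) (Fin n) ℝ := fun i j =>
  (Submodule.orthogonalProjectionOnto
      (Submodule.span ℝ (Set.range (fun s : S => (WithLp.equiv 2 (Fin n → ℝ)).symm (A s))))
      ((WithLp.equiv 2 (Fin n → ℝ)).symm (A i)) : EuclideanSpace ℝ (Fin n)) j

def rowSub {m n : ℕ} (A : Matrix (Fin m) (Fin n) ℝ) (S : Finset (Fin m)) :
    Matrix {x // x ∈ S} (Fin n) ℝ := fun i j => A i.1 j

noncomputable def gramDet {m n : ℕ} (A : Matrix (Fin m) (Fin n) ℝ) (S : Finset (Fin m)) : ℝ :=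
  (rowSub A S * (rowSub A S)ᵀ).det

noncomputable def frobSq {m n : ℕ} (M : Matrix (Fin m) (Fin n) ℝ) : ℝ :=
  ∑ i, ∑ j, (M i j)^2

noncomputable def specNorm {m n : ℕ} (M : Matrix (Fin m) (Fin n) ℝ) : ℝ :=
  ‖LinearMap.toContinuousLinearMap (Matrix.toEuclideanLin M)‖

/-!
Removing from the rows indexed by `T` their projections onto the span of the rows indexed by
`U` is a unimodular row operation, and afterwards the two blocks of rows are orthogonal, so the
Gram matrix of `U ∪ T` becomes block diagonal:
`gramDet A (U ∪ T) = gramDet A U * gramDet (A - projSpan A U) T`.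
With `U = S ∪ {i}` this factors each summand on the left, and with `U = S`, `T = {i}` it gives
`gramDet A (S ∪ {i}) = ‖b_i‖² · gramDet A S`. On the right, the rows of `C` indexed by `S ∪ {i}`
vanish, so only the sets `T` disjoint from `S ∪ {i}` contribute.
-/

namespace Matrix

variable {R : Type*} [CommRing R] {ι κ ν : Type*} [Fintype ι] [Fintype κ] [Fintype ν]
  [DecidableEq ι] [DecidableEq κ]

theorem det_fromRows_mul_transpose_of_mul_transpose_eq_zero (X : Matrix ι ν R)
    (Y : Matrix κ ν R) (h : X * Yᵀ = 0) :
    det (fromRows X Y * (fromRows X Y)ᵀ) = det (X * Xᵀ) * det (Y * Yᵀ) := by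
  have h' : Y * Xᵀ = 0 := by simpa using congrArg transpose h
  rw [transpose_fromRows, fromRows_mul_fromCols, h, h', det_fromBlocks_zero₁₂]

theorem det_fromRows_add_mul_mul_transpose (X : Matrix ι ν R) (Y : Matrix κ ν R)
    (c : Matrix κ ι R) :
    det (fromRows X (Y + c * X) * (fromRows X (Y + c * X))ᵀ)
      = det (fromRows X Y * (fromRows X Y)ᵀ) := by
  have hP : fromRows X (Y + c * X) =
      (fromBlocks 1 0 c 1 : Matrix (ι ⊕ κ) (ι ⊕ κ) R) * fromRows X Y := by
    rw [fromBlocks_mul_fromRows]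
    simp [add_comm]
  rw [hP, transpose_mul, ← Matrix.mul_assoc, Matrix.mul_assoc _ (fromRows X Y), det_mul, det_mul,
    det_transpose, det_fromBlocks_zero₁₂]
  simp

end Matrix

section RowSpan

variable {m n : ℕ} (A : Matrix (Fin m) (Fin n) ℝ) (S T : Finset (Fin m))

noncomputable def rowSpan : Submodule ℝ (EuclideanSpace ℝ (Fin n)) :=
  Submodule.span ℝ (Set.range fun s : S => WithLp.toLp 2 (A s))

theorem projSpan_row_eq_starProjection (i : Fin m) :
    projSpan A S i = WithLp.ofLp ((rowSpan A S).starProjection (WithLp.toLp 2 (A i))) :=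
  rfl

theorem toLp_row_mem_rowSpan {j : Fin m} (hj : j ∈ S) : WithLp.toLp 2 (A j) ∈ rowSpan A S :=
  Submodule.subset_span ⟨⟨j, hj⟩, rfl⟩

theorem projSpan_row_of_mem {j : Fin m} (hj : j ∈ S) : projSpan A S j = A j := by
  rw [projSpan_row_eq_starProjection,
    Submodule.starProjection_eq_self_iff.mpr (toLp_row_mem_rowSpan A S hj)]

theorem sub_projSpan_row_of_mem {j : Fin m} (hj : j ∈ S) : (A - projSpan A S) j = 0 := by
  rw [show (A - projSpan A S) j = A j - projSpan A S j from rfl, projSpan_row_of_mem A S hj,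
    sub_self]

theorem dotProduct_sub_projSpan_eq_zero {u : Fin m} (hu : u ∈ S) (t : Fin m) :
    A u ⬝ᵥ (A - projSpan A S) t = 0 := by
  have h := Submodule.sub_starProjection_mem_orthogonal (K := rowSpan A S)
    (WithLp.toLp 2 (A t)) _ (toLp_row_mem_rowSpan A S hu)
  rw [EuclideanSpace.inner_eq_star_dotProduct] at h
  rw [show (A - projSpan A S) t = A t - projSpan A S t from rfl, dotProduct_sub,
    projSpan_row_eq_starProjection]
  simpa [dotProduct_comm, dotProduct_sub] using h

theorem exists_projSpan_row_eq_vecMul (t : Fin m) :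
    ∃ c : S → ℝ, projSpan A S t = c ᵥ* rowSub A S := by
  obtain ⟨c, hc⟩ := Submodule.mem_span_range_iff_exists_fun ℝ |>.mp
    ((rowSpan A S).starProjection_apply_mem (WithLp.toLp 2 (A t)))
  refine ⟨c, ?_⟩
  rw [projSpan_row_eq_starProjection, ← hc, vecMul_eq_sum]
  ext k
  simp [rowSub]

theorem rowSub_mul_transpose_rowSub_sub_projSpan_eq_zero :
    rowSub A S * (rowSub (A - projSpan A S) T)ᵀ = 0 := by
  ext u t
  exact dotProduct_sub_projSpan_eq_zero A S u.2 t

theorem exists_rowSub_eq_rowSub_sub_projSpan_add_mul :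
    ∃ c : Matrix T S ℝ, rowSub A T = rowSub (A - projSpan A S) T + c * rowSub A S := by
  choose c hc using fun t : T => exists_projSpan_row_eq_vecMul A S t
  refine ⟨of c, ?_⟩
  ext t k
  have hk := congrFun (hc t) k
  simp only [vecMul, dotProduct] at hk
  simp [rowSub, Matrix.mul_apply, hk]

end RowSpan

section GramDet

variable {m n : ℕ}

theorem gramDet_union_eq_det_fromRows (M : Matrix (Fin m) (Fin n) ℝ) {U T : Finset (Fin m)}
    (h : Disjoint U T) :
    gramDet M (U ∪ T) =
      det (fromRows (rowSub M U) (rowSub M T) * (fromRows (rowSub M U) (rowSub M T))ᵀ) := by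
  have hsub : rowSub M (U ∪ T) =
      (fromRows (rowSub M U) (rowSub M T)).submatrix (Equiv.Finset.union U T h).symm id := by
    ext x k
    obtain ⟨y, rfl⟩ := (Equiv.Finset.union U T h).surjective x
    rcases y with u | t <;> simp [rowSub]
  rw [gramDet, hsub, transpose_submatrix, ← submatrix_mul _ _ _ _ _ Function.bijective_id,
    det_submatrix_equiv_self]

theorem gramDet_union (A : Matrix (Fin m) (Fin n) ℝ) {U T : Finset (Fin m)} (h : Disjoint U T) :
    gramDet A (U ∪ T) = gramDet A U * gramDet (A - projSpan A U) T := by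
  obtain ⟨c, hc⟩ := exists_rowSub_eq_rowSub_sub_projSpan_add_mul A U T
  rw [gramDet_union_eq_det_fromRows A h, hc, det_fromRows_add_mul_mul_transpose,
    det_fromRows_mul_transpose_of_mul_transpose_eq_zero _ _
      (rowSub_mul_transpose_rowSub_sub_projSpan_eq_zero A U T), gramDet, gramDet]

theorem gramDet_singleton (M : Matrix (Fin m) (Fin n) ℝ) (i : Fin m) :
    gramDet M {i} = ∑ k, M i k ^ 2 := by
  rw [gramDet, det_unique]
  simp [rowSub, Matrix.mul_apply, sq]

theorem gramDet_insert (A : Matrix (Fin m) (Fin n) ℝ) {S : Finset (Fin m)} {i : Fin m}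
    (hi : i ∉ S) : gramDet A (insert i S) = (∑ k, (A - projSpan A S) i k ^ 2) * gramDet A S := by
  rw [Finset.insert_eq, Finset.union_comm,
    gramDet_union A (Finset.disjoint_singleton_right.mpr hi), gramDet_singleton, mul_comm]

theorem gramDet_eq_zero_of_row_eq_zero (M : Matrix (Fin m) (Fin n) ℝ) {T : Finset (Fin m)}
    {j : Fin m} (hj : j ∈ T) (hM : M j = 0) : gramDet M T = 0 := by
  apply det_eq_zero_of_row_eq_zero ⟨j, hj⟩
  intro t
  simp [rowSub, Matrix.mul_apply, hM]

theorem sum_powersetCard_univ_gramDet_sub_projSpan (A : Matrix (Fin m) (Fin n) ℝ)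
    (U : Finset (Fin m)) (r : ℕ) :
    ∑ T ∈ Finset.powersetCard r Finset.univ, gramDet (A - projSpan A U) T
      = ∑ T ∈ Finset.powersetCard r (Finset.univ \ U), gramDet (A - projSpan A U) T := by
  refine (Finset.sum_subset (Finset.powersetCard_mono (Finset.subset_univ _)) ?_).symm
  intro T hT hTU
  obtain ⟨j, hjT, hjU⟩ : ∃ j ∈ T, j ∈ U := by
    by_contra! h
    exact hTU (Finset.mem_powersetCard.mpr
      ⟨fun j hj => Finset.mem_sdiff.mpr ⟨Finset.mem_univ j, h j hj⟩,
        (Finset.mem_powersetCard.mp hT).2⟩)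
  exact gramDet_eq_zero_of_row_eq_zero _ hjT (sub_projSpan_row_of_mem A U hjU)

end GramDet

/-- ∑_{T ⊆ [m]\(S∪{i}), |T|=r} det(A_{S∪{i}∪T} A_{S∪{i}∪T}ᵀ)
  = ‖b_i‖² · det(A_S A_Sᵀ) · ∑_{|T|=r} det(C_T C_Tᵀ), where b_i is the i-th row of
B = A − π_S(A) and C = A − π_{S∪{i}}(A). -/
theorem sum_det_insert {m n : ℕ} (A : Matrix (Fin m) (Fin n) ℝ) (S : Finset (Fin m))
    (i : Fin m) (hi : i ∉ S) (B C : Matrix (Fin m) (Fin n) ℝ)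
    (hB : B = A - projSpan A S) (hC : C = A - projSpan A (insert i S)) (r : ℕ) :
    ∑ T ∈ Finset.powersetCard r (Finset.univ \ insert i S), gramDet A (insert i S ∪ T)
      = (∑ j, (B i j)^2) * gramDet A S *
          ∑ T ∈ Finset.powersetCard r (Finset.univ : Finset (Fin m)), gramDet C T := by
  subst hB hC
  rw [sum_powersetCard_univ_gramDet_sub_projSpan, Finset.mul_sum, ← gramDet_insert A hi]
  refine Finset.sum_congr rfl fun T hT => ?_
  exact gramDet_union A
    (Finset.disjoint_of_subset_right (Finset.mem_powersetCard.mp hT).1 Finset.disjoint_sdiff)
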